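/- For every n ≥ 1, (n−1)·R_n = Σ_{ℓ=1}^{n−1} R_ℓ ▷ R_{n−ℓ} in T(ℝ^d) ⊗ T(ℝ^d). -/

import Mathlib

open scoped TensorProduct

set_option maxSynthPendingDepth 3

noncomputable section

abbrev Word (d : ℕ) := List (Fin d)
abbrev Ten (d : ℕ) := Word d →₀ ℝ

variable {d : ℕ}

def wd (w : Word d) : Ten d := Finsupp.single w 1

def lift2 (f : Word d → Word d → Ten d) : Ten d →ₗ[ℝ] Ten d →ₗ[ℝ] Ten d :=
  Finsupp.lsum ℝ fun u => LinearMap.toSpanSingleton ℝ (Ten d →ₗ[ℝ] Ten d)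
    (Finsupp.lsum ℝ fun v => LinearMap.toSpanSingleton ℝ (Ten d) (f u v))

def shR : Word d → Word d → Ten d
  | [], v => wd v.reverse
  | a :: u, [] => wd (a :: u).reverse
  | a :: u, b :: v =>
      Finsupp.mapDomain (fun w => w ++ [a]) (shR u (b :: v)) +
        Finsupp.mapDomain (fun w => w ++ [b]) (shR (a :: u) v)
termination_by u v => u.length + v.length

def shW (u v : Word d) : Ten d := shR u.reverse v.reverse

def shuffle : Ten d →ₗ[ℝ] Ten d →ₗ[ℝ] Ten d := lift2 shW

def hsW (u v : Word d) : Ten d :=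
  match v.getLast? with
  | none => 0
  | some b => Finsupp.mapDomain (fun w => w ++ [b]) (shW u v.dropLast)

def halfSh : Ten d →ₗ[ℝ] Ten d →ₗ[ℝ] Ten d := lift2 hsW

def areaOp (x y : Ten d) : Ten d := halfSh x y - halfSh y x

def concW (u v : Word d) : Ten d := wd (u ++ v)

def concM : Ten d →ₗ[ℝ] Ten d →ₗ[ℝ] Ten d := lift2 concW

def brk (x y : Ten d) : Ten d := concM x y - concM y x

/-- `X` generates the shuffle algebra: the smallest unital ⧢-subalgebra containing `X` is all. -/
def ShuffleGen (X : Set (Ten d)) : Prop :=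
  ∀ p : Submodule ℝ (Ten d), wd ([] : Word d) ∈ p → X ⊆ ↑p →
    (∀ x ∈ p, ∀ y ∈ p, shuffle x y ∈ p) → ∀ z : Ten d, z ∈ p

def shPow (x : Ten d) : ℕ → Ten d
  | 0 => wd []
  | n + 1 => shuffle x (shPow x n)

def monEval (X : Set (Ten d)) (m : ↥X →₀ ℕ) : Ten d :=
  (m.support.toList.map fun v : ↥X => shPow (v : Ten d) (m v)).foldr (fun a b => shuffle a b) (wd [])

def polyEval (X : Set (Ten d)) (p : MvPolynomial (↥X) ℝ) : Ten d :=
  ∑ m ∈ p.support, MvPolynomial.coeff m p • monEval X m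

/-- `X` freely generates the shuffle algebra. -/
def FreeShuffleGen (X : Set (Ten d)) : Prop :=
  ShuffleGen X ∧ Function.Bijective (polyEval (d := d) X)

/-- Homogeneous component of degree `n`. -/
def Tn (d n : ℕ) : Submodule ℝ (Ten d) :=
  Submodule.span ℝ {x | ∃ w : Word d, w.length = n ∧ x = wd w}

/-- The free Lie algebra: smallest subspace containing the letters, closed under bracket. -/
def freeLie (d : ℕ) : Submodule ℝ (Ten d) :=
  sInf {p | (∀ i : Fin d, wd [i] ∈ p) ∧ ∀ x ∈ p, ∀ y ∈ p, brk x y ∈ p}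

/-- Pairing making the words orthonormal. -/
def pairT (x y : Ten d) : ℝ := x.sum fun w c => c * y w

/-- Smallest subspace containing the letters, closed under area. -/
def areaCl (d : ℕ) : Submodule ℝ (Ten d) :=
  sInf {p | (∀ i : Fin d, wd [i] ∈ p) ∧ ∀ x ∈ p, ∀ y ∈ p, areaOp x y ∈ p}

def rhoW : Word d → Ten d
  | [] => 0
  | [i] => wd [i]
  | i :: j :: u =>
      concM (wd [i]) (rhoW (j :: u)) -
        concM (wd [(j :: u).getLast (by simp)]) (rhoW (i :: (j :: u).dropLast))
termination_by w => w.length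
decreasing_by
  · simp
  · simp [List.length_dropLast]

def rhoMap : Ten d →ₗ[ℝ] Ten d :=
  Finsupp.lsum ℝ fun w => LinearMap.toSpanSingleton ℝ (Ten d) (rhoW w)

/-- Right-bracketing (Dynkin) map on words. -/
def rW : Word d → Ten d
  | [] => 0
  | [i] => wd [i]
  | i :: j :: u => brk (wd [i]) (rW (j :: u))

def rMap : Ten d →ₗ[ℝ] Ten d :=
  Finsupp.lsum ℝ fun w => LinearMap.toSpanSingleton ℝ (Ten d) (rW w)

def wordsLen (d n : ℕ) : Finset (Word d) :=
  (Finset.univ : Finset (Fin n → Fin d)).image List.ofFn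

def Rtens (d n : ℕ) : Ten d ⊗[ℝ] Ten d :=
  ∑ w ∈ wordsLen d n, wd w ⊗ₜ[ℝ] rW w

def top2 (f g : Ten d →ₗ[ℝ] Ten d →ₗ[ℝ] Ten d) :
    Ten d ⊗[ℝ] Ten d →ₗ[ℝ] Ten d ⊗[ℝ] Ten d →ₗ[ℝ] Ten d ⊗[ℝ] Ten d :=
  TensorProduct.lift
    (((TensorProduct.mapBilinear (RingHom.id ℝ) (Ten d) (Ten d) (Ten d) (Ten d)).comp f).compl₂ g)

def brkL : Ten d →ₗ[ℝ] Ten d →ₗ[ℝ] Ten d := concM (d := d) - (concM (d := d)).flip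

def areaL : Ten d →ₗ[ℝ] Ten d →ₗ[ℝ] Ten d := halfSh (d := d) - (halfSh (d := d)).flip

/-- The ▷ operation on the tensor square. -/
def rop : Ten d ⊗[ℝ] Ten d →ₗ[ℝ] Ten d ⊗[ℝ] Ten d →ₗ[ℝ] Ten d ⊗[ℝ] Ten d :=
  top2 halfSh brkL

/-- The symmetrized operation ▷_Sym. -/
def ropSym : Ten d ⊗[ℝ] Ten d →ₗ[ℝ] Ten d ⊗[ℝ] Ten d →ₗ[ℝ] Ten d ⊗[ℝ] Ten d :=
  top2 areaL brkL

/-- The ■ product: shuffle on the left, concatenation on the right. -/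
def bop : Ten d ⊗[ℝ] Ten d →ₗ[ℝ] Ten d ⊗[ℝ] Ten d →ₗ[ℝ] Ten d ⊗[ℝ] Ten d :=
  top2 shuffle concM

/-- Labelled binary trees over the alphabet. -/
inductive LTree (d : ℕ) : Type
  | leaf : Fin d → LTree d
  | node : LTree d → LTree d → LTree d

def leavesT : LTree d → ℕ
  | .leaf _ => 1
  | .node a b => leavesT a + leavesT b

def areaT : LTree d → Ten d
  | .leaf i => wd [i]
  | .node a b => areaOp (areaT a) (areaT b)

def lieT : LTree d → Ten d
  | .leaf i => wd [i]
  | .node a b => brk (lieT a) (lieT b)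

def cT : LTree d → ℕ
  | .leaf _ => 1
  | .node a b => 2 * cT a * cT b * (leavesT a + leavesT b - 1)

section Aux

variable {d : ℕ}

lemma single_eq_smul_wd (u : Word d) (c : ℝ) :
    (Finsupp.single u c : Ten d) = c • wd u := by
  simp [wd, Finsupp.smul_single]

lemma lift2_wd (f : Word d → Word d → Ten d) (u v : Word d) :
    lift2 f (wd u) (wd v) = f u v := by
  simp [lift2, wd, Finsupp.lsum_single, LinearMap.toSpanSingleton_apply]

lemma md_wd (f : Word d → Word d) (w : Word d) :
    Finsupp.mapDomain f (wd w) = wd (f w) := by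
  simp [wd, Finsupp.mapDomain_single]

lemma md_md (f g : Word d → Word d) (x : Ten d) :
    Finsupp.mapDomain f (Finsupp.mapDomain g x)
      = Finsupp.mapDomain (fun w => f (g w)) x := by
  rw [← Finsupp.mapDomain_comp]; rfl

lemma md_cons_append (a b : Fin d) (x : Ten d) :
    Finsupp.mapDomain (· ++ [b]) (Finsupp.mapDomain (a :: ·) x)
      = Finsupp.mapDomain (a :: ·) (Finsupp.mapDomain (· ++ [b]) x) := by
  rw [md_md, md_md]; rfl

def shL : Word d → Word d → Ten d
  | [], v => wd v
  | a :: u, [] => wd (a :: u)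
  | a :: u, b :: v =>
      Finsupp.mapDomain (fun w => a :: w) (shL u (b :: v)) +
        Finsupp.mapDomain (fun w => b :: w) (shL (a :: u) v)
termination_by u v => u.length + v.length

lemma shL_nil_left (v : Word d) : shL [] v = wd v := by simp [shL]

lemma shL_nil_right : ∀ u : Word d, shL u [] = wd u := by
  rintro (_ | ⟨a, u⟩) <;> simp [shL]

lemma shL_cons_cons (a b : Fin d) (u v : Word d) :
    shL (a :: u) (b :: v) =
      Finsupp.mapDomain (fun w => a :: w) (shL u (b :: v)) +
        Finsupp.mapDomain (fun w => b :: w) (shL (a :: u) v) := by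
  rw [shL]

lemma shL_snoc (a b : Fin d) : ∀ (n : ℕ) (u v : Word d), u.length + v.length ≤ n →
    shL (u ++ [a]) (v ++ [b]) =
      Finsupp.mapDomain (· ++ [a]) (shL u (v ++ [b])) +
        Finsupp.mapDomain (· ++ [b]) (shL (u ++ [a]) v) := by
  intro n
  induction n with
  | zero =>
    rintro (_ | ⟨c, u⟩) (_ | ⟨e, v⟩) h <;> simp at h
    simp only [List.nil_append, shL_cons_cons, shL_nil_left, shL_nil_right, md_wd,
      List.cons_append, List.singleton_append]
    rw [add_comm]
  | succ n ih =>
    rintro (_ | ⟨c, u⟩) (_ | ⟨e, v⟩) h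
    · simp only [List.nil_append, shL_cons_cons, shL_nil_left, shL_nil_right, md_wd,
        List.cons_append, List.singleton_append]
      rw [add_comm]
    · -- u = [], v = e :: v
      have h1 := ih [] v (by simp at h ⊢; omega)
      simp only [List.nil_append] at h1
      simp only [List.nil_append, List.cons_append] at *
      rw [shL_cons_cons, shL_cons_cons, shL_nil_left, h1]
      simp only [shL_nil_left, Finsupp.mapDomain_add, md_md, md_wd,
        List.cons_append, List.nil_append, List.append_assoc, List.singleton_append]
      abel
    · -- u = c :: u, v = []
      have h1 := ih u [] (by simp at h ⊢; omega)
      simp only [List.nil_append] at h1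
      simp only [List.nil_append, List.cons_append] at *
      rw [shL_cons_cons, shL_cons_cons, shL_nil_right, h1]
      simp only [shL_nil_right, Finsupp.mapDomain_add, md_md, md_wd,
        List.cons_append, List.nil_append, List.append_assoc, List.singleton_append]
      abel
    · -- u = c :: u, v = e :: v
      have h1 := ih u (e :: v) (by simp at h ⊢; omega)
      have h2 := ih (c :: u) v (by simp at h ⊢; omega)
      simp only [List.cons_append] at *
      rw [shL_cons_cons, shL_cons_cons, shL_cons_cons, h1, h2]
      simp only [Finsupp.mapDomain_add, md_md, md_wd,
        List.cons_append, List.nil_append, List.append_assoc, List.singleton_append]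
      abel

lemma shR_nil_right : ∀ u : Word d, shR u [] = wd u.reverse := by
  rintro (_ | ⟨a, u⟩) <;> simp [shR]

lemma shR_eq_shL : ∀ u v : Word d,
    shR u v = Finsupp.mapDomain List.reverse (shL u v) := by
  have key : ∀ (n : ℕ) (u v : Word d), u.length + v.length ≤ n →
      shR u v = Finsupp.mapDomain List.reverse (shL u v) := by
    intro n
    induction n with
    | zero =>
      rintro (_ | ⟨a, u⟩) (_ | ⟨b, v⟩) h <;> simp at h
      simp [shR, shL, md_wd]
    | succ n ih =>
      rintro (_ | ⟨a, u⟩) (_ | ⟨b, v⟩) h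
      · simp [shR, shL, md_wd]
      · simp [shR, shL, md_wd]
      · rw [shR_nil_right, shL_nil_right, md_wd]
      · rw [shR, shL_cons_cons, ih u (b :: v) (by simp at h ⊢; omega),
          ih (a :: u) v (by simp at h ⊢; omega)]
        simp only [Finsupp.mapDomain_add, md_md, List.reverse_cons]
  intro u v; exact key (u.length + v.length) u v le_rfl

lemma shW_nil_left (v : Word d) : shW [] v = wd v := by
  simp [shW, shR]

lemma shW_nil_right (u : Word d) : shW u [] = wd u := by
  simp [shW, shR_nil_right]

lemma shW_cons_cons (a b : Fin d) (u v : Word d) :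
    shW (a :: u) (b :: v) =
      Finsupp.mapDomain (a :: ·) (shW u (b :: v)) +
        Finsupp.mapDomain (b :: ·) (shW (a :: u) v) := by
  simp only [shW, List.reverse_cons, shR_eq_shL]
  rw [shL_snoc a b (u.reverse.length + v.reverse.length) u.reverse v.reverse le_rfl]
  simp only [Finsupp.mapDomain_add, md_md, List.reverse_append, List.reverse_cons,
    List.reverse_nil, List.nil_append, List.singleton_append]

end Aux
section Aux2

variable {d : ℕ}

lemma concM_wd (u v : Word d) : concM (wd u) (wd v) = wd (u ++ v) :=
  lift2_wd _ u v

lemma conc_assoc (x y z : Ten d) :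
    concM (concM x y) z = concM x (concM y z) := by
  induction x using Finsupp.induction_linear with
  | zero => simp
  | add f g hf hg => simp [map_add, LinearMap.add_apply, hf, hg]
  | single u c =>
    induction y using Finsupp.induction_linear with
    | zero => simp
    | add f g hf hg => simp [map_add, LinearMap.add_apply, hf, hg]
    | single v c' =>
      induction z using Finsupp.induction_linear with
      | zero => simp
      | add f g hf hg => simp [map_add, hf, hg]
      | single w c'' =>
        simp only [single_eq_smul_wd, map_smul, LinearMap.smul_apply, concM_wd,
          List.append_assoc]

lemma brkL_apply (x y : Ten d) : brkL x y = brk x y := rfl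

lemma brk_jacobi (a x y : Ten d) :
    brk (brk a x) y + brk x (brk a y) = brk a (brk x y) := by
  simp only [brk, map_sub, LinearMap.sub_apply, conc_assoc]
  abel

lemma rW_cons (a : Fin d) (w : Word d) (h : w ≠ []) :
    rW (a :: w) = brk (wd [a]) (rW w) := by
  cases w with
  | nil => exact absurd rfl h
  | cons c w' => rfl

lemma hsW_snoc (u v : Word d) (b : Fin d) :
    hsW u (v ++ [b]) = Finsupp.mapDomain (· ++ [b]) (shW u v) := by
  simp [hsW, List.getLast?_concat, List.dropLast_concat]

lemma mem_wordsLen {w : Word d} {n : ℕ} : w ∈ wordsLen d n ↔ w.length = n := by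
  simp only [wordsLen, Finset.mem_image, Finset.mem_univ, true_and]
  constructor
  · rintro ⟨f, rfl⟩; simp
  · rintro rfl
    exact ⟨w.get, List.ofFn_get w⟩

lemma wordsLen_zero : wordsLen d 0 = {[]} := by
  ext w; simp [mem_wordsLen, List.length_eq_zero_iff]

lemma sum_wordsLen_cons {M : Type*} [AddCommMonoid M] (n : ℕ) (f : Word d → M) :
    ∑ w ∈ wordsLen d (n + 1), f w = ∑ a : Fin d, ∑ u ∈ wordsLen d n, f (a :: u) := by
  rw [← Finset.sum_product']
  refine (Finset.sum_bij (fun p _ => p.1 :: p.2) ?_ ?_ ?_ ?_).symm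
  · rintro ⟨a, u⟩ hp
    simp only [Finset.mem_product, Finset.mem_univ, true_and, mem_wordsLen] at hp ⊢
    simp [hp]
  · rintro ⟨a, u⟩ hp ⟨a', u'⟩ hp' he
    simp only [List.cons.injEq] at he
    simp [he.1, he.2]
  · intro w hw
    rw [mem_wordsLen] at hw
    cases w with
    | nil => simp at hw
    | cons a u =>
      refine ⟨(a, u), ?_, rfl⟩
      simp only [Finset.mem_product, Finset.mem_univ, true_and, mem_wordsLen]
      simpa using hw
  · intros; rfl

lemma sum_wordsLen_snoc {M : Type*} [AddCommMonoid M] (n : ℕ) (f : Word d → M) :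
    ∑ w ∈ wordsLen d (n + 1), f w = ∑ b : Fin d, ∑ u ∈ wordsLen d n, f (u ++ [b]) := by
  rw [← Finset.sum_product']
  refine (Finset.sum_bij (fun p _ => p.2 ++ [p.1]) ?_ ?_ ?_ ?_).symm
  · rintro ⟨b, u⟩ hp
    simp only [Finset.mem_product, Finset.mem_univ, true_and, mem_wordsLen] at hp ⊢
    simp [hp]
  · rintro ⟨b, u⟩ hp ⟨b', u'⟩ hp' he
    simp only [List.append_left_inj, List.append_right_inj] at he
    have h1 : u = u' ∧ [b] = [b'] := by
      constructor
      · exact List.append_inj_left' he (by simp)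
      · exact List.append_inj_right' he (by
          simp only [Finset.mem_product, mem_wordsLen] at hp hp'
          simp [hp.2, hp'.2])
    simp only [List.cons.injEq] at h1
    simp [h1.1, h1.2.1]
  · intro w hw
    rw [mem_wordsLen] at hw
    have hne : w ≠ [] := by intro h; subst h; simp at hw
    refine ⟨(w.getLast hne, w.dropLast), ?_, List.dropLast_append_getLast hne⟩
    simp only [Finset.mem_product, Finset.mem_univ, true_and, mem_wordsLen]
    simp [List.length_dropLast, hw]
  · intros; rfl

lemma halfSh_wd (u v : Word d) : halfSh (wd u) (wd v) = hsW u v :=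
  lift2_wd _ u v

lemma rop_tmul (x y x' y' : Ten d) :
    rop (x ⊗ₜ[ℝ] y) (x' ⊗ₜ[ℝ] y') = halfSh x x' ⊗ₜ[ℝ] brk y y' := by
  simp only [rop, top2, TensorProduct.lift.tmul, LinearMap.compl₂_apply,
    LinearMap.comp_apply, TensorProduct.mapBilinear_apply, TensorProduct.map_tmul,
    brkL_apply]

def Phi (a : Fin d) : Ten d ⊗[ℝ] Ten d →ₗ[ℝ] Ten d ⊗[ℝ] Ten d :=
  TensorProduct.map (Finsupp.lmapDomain ℝ ℝ (a :: ·)) (brkL (wd [a]))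

lemma Phi_tmul (a : Fin d) (x y : Ten d) :
    Phi a (x ⊗ₜ[ℝ] y) = Finsupp.mapDomain (a :: ·) x ⊗ₜ[ℝ] brk (wd [a]) y := by
  simp [Phi, TensorProduct.map_tmul, Finsupp.lmapDomain_apply, brkL_apply]

end Aux2
section Main

variable {d : ℕ}

lemma sum_Icc_one {M : Type*} [AddCommMonoid M] (k : ℕ) (f : ℕ → M) :
    ∑ j ∈ Finset.Icc 1 k, f j = ∑ i ∈ Finset.range k, f (i + 1) := by
  rw [← Finset.Ico_add_one_right_eq_Icc, Finset.sum_Ico_eq_sum_range]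
  simp [Nat.add_comm]

def Tt (b : Fin d) (u v : Word d) : Ten d ⊗[ℝ] Ten d :=
  Finsupp.mapDomain (· ++ [b]) (shW u v) ⊗ₜ[ℝ] brk (rW u) (rW (v ++ [b]))

def Xt (b a : Fin d) (p v : Word d) : Ten d ⊗[ℝ] Ten d :=
  Finsupp.mapDomain (· ++ [b]) (Finsupp.mapDomain (a :: ·) (shW p v)) ⊗ₜ[ℝ]
    brk (rW (a :: p)) (rW (v ++ [b]))

def Yt (b c : Fin d) (P q : Word d) : Ten d ⊗[ℝ] Ten d :=
  Finsupp.mapDomain (· ++ [b]) (Finsupp.mapDomain (c :: ·) (shW P q)) ⊗ₜ[ℝ]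
    brk (rW P) (rW (c :: (q ++ [b])))

def Rsn (d : ℕ) (b : Fin d) (m : ℕ) : Ten d ⊗[ℝ] Ten d :=
  ∑ w ∈ wordsLen d m, wd (w ++ [b]) ⊗ₜ[ℝ] rW (w ++ [b])

def Gs (d : ℕ) (b : Fin d) (m : ℕ) : Ten d ⊗[ℝ] Ten d :=
  ∑ j ∈ Finset.Icc 1 m, ∑ u ∈ wordsLen d j, ∑ v ∈ wordsLen d (m - j), Tt b u v

lemma Tt_cons_nil (b a : Fin d) (p : Word d) : Tt b (a :: p) [] = Xt b a p [] := by
  simp [Tt, Xt, shW_nil_right, md_wd]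

lemma Tt_cons_cons (b a c : Fin d) (p v : Word d) :
    Tt b (a :: p) (c :: v) = Xt b a p (c :: v) + Yt b c (a :: p) v := by
  simp only [Tt, Xt, Yt, shW_cons_cons, Finsupp.mapDomain_add, TensorProduct.add_tmul,
    List.cons_append]

lemma X_add_Y (b a : Fin d) (p q : Word d) (hp : p ≠ []) :
    Xt b a p q + Yt b a p q = Phi a (Tt b p q) := by
  rw [Tt, Phi_tmul, Xt, Yt, rW_cons a p hp, rW_cons a (q ++ [b]) (by simp),
    md_cons_append, ← TensorProduct.tmul_add, brk_jacobi]

lemma Xt_nil (b a : Fin d) (v : Word d) :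
    Xt b a [] v = wd ((a :: v) ++ [b]) ⊗ₜ[ℝ] rW ((a :: v) ++ [b]) := by
  rw [Xt, shW_nil_left, md_wd, md_wd, List.cons_append,
    rW_cons a (v ++ [b]) (by simp)]
  rfl

lemma Phi_basis (a b : Fin d) (w : Word d) :
    Phi a (wd (w ++ [b]) ⊗ₜ[ℝ] rW (w ++ [b]))
      = wd ((a :: w) ++ [b]) ⊗ₜ[ℝ] rW ((a :: w) ++ [b]) := by
  rw [Phi_tmul, md_wd, List.cons_append, rW_cons a (w ++ [b]) (by simp)]

lemma sum_T_splitS (b a : Fin d) (p : Word d) (M : ℕ) :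
    ∑ v ∈ wordsLen d (M + 1), Tt b (a :: p) v =
      ∑ v ∈ wordsLen d (M + 1), Xt b a p v +
        ∑ c : Fin d, ∑ q ∈ wordsLen d M, Yt b c (a :: p) q := by
  rw [sum_wordsLen_cons M (Tt b (a :: p)), sum_wordsLen_cons M (Xt b a p)]
  simp only [Tt_cons_cons, Finset.sum_add_distrib]

lemma Rsn_succ (b : Fin d) (k : ℕ) :
    Rsn d b (k + 1) = ∑ a : Fin d, ∑ w ∈ wordsLen d k,
      wd ((a :: w) ++ [b]) ⊗ₜ[ℝ] rW ((a :: w) ++ [b]) := by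
  rw [Rsn, sum_wordsLen_cons]

lemma Gs_eq (b : Fin d) (m : ℕ) : Gs d b m = m • Rsn d b m := by
  induction m with
  | zero => simp [Gs, zero_nsmul]
  | succ k ih =>
    have hGs : Gs d b (k + 1)
        = ∑ i ∈ Finset.range (k + 1), ∑ a : Fin d, ∑ p ∈ wordsLen d i,
            ∑ v ∈ wordsLen d (k - i), Tt b (a :: p) v := by
      rw [Gs, sum_Icc_one]
      refine Finset.sum_congr rfl fun i hi => ?_
      have h3 : k + 1 - (i + 1) = k - i := by omega
      rw [h3, sum_wordsLen_cons]
    set S1 : Ten d ⊗[ℝ] Ten d := ∑ i ∈ Finset.range (k + 1), ∑ a : Fin d,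
      ∑ p ∈ wordsLen d i, ∑ v ∈ wordsLen d (k - i), Xt b a p v with hS1def
    set S2 : Ten d ⊗[ℝ] Ten d := ∑ i ∈ Finset.range k, ∑ a : Fin d,
      ∑ p ∈ wordsLen d i, ∑ c : Fin d, ∑ q ∈ wordsLen d (k - 1 - i), Yt b c (a :: p) q
      with hS2def
    have hGs2 : Gs d b (k + 1) = S1 + S2 := by
      rw [hGs, hS1def, Finset.sum_range_succ, Finset.sum_range_succ]
      have hlast : ∀ a : Fin d, ∀ p ∈ wordsLen d k,
          ∑ v ∈ wordsLen d (k - k), Tt b (a :: p) v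
            = ∑ v ∈ wordsLen d (k - k), Xt b a p v := by
        intro a p _
        simp [Nat.sub_self, wordsLen_zero, Tt_cons_nil]
      have hmain : ∀ i ∈ Finset.range k, ∀ a : Fin d, ∀ p : Word d,
          ∑ v ∈ wordsLen d (k - i), Tt b (a :: p) v
            = ∑ v ∈ wordsLen d (k - i), Xt b a p v
              + ∑ c : Fin d, ∑ q ∈ wordsLen d (k - 1 - i), Yt b c (a :: p) q := by
        intro i hi a p
        have h4 : k - i = (k - 1 - i) + 1 := by
          simp only [Finset.mem_range] at hi; omega
        rw [h4, sum_T_splitS, ← h4]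
      have hsum : ∑ i ∈ Finset.range k, ∑ a : Fin d, ∑ p ∈ wordsLen d i,
            ∑ v ∈ wordsLen d (k - i), Tt b (a :: p) v
          = (∑ i ∈ Finset.range k, ∑ a : Fin d, ∑ p ∈ wordsLen d i,
              ∑ v ∈ wordsLen d (k - i), Xt b a p v) + S2 := by
        rw [hS2def, ← Finset.sum_add_distrib]
        refine Finset.sum_congr rfl fun i hi => ?_
        rw [← Finset.sum_add_distrib]
        refine Finset.sum_congr rfl fun a _ => ?_
        rw [← Finset.sum_add_distrib]
        refine Finset.sum_congr rfl fun p _ => ?_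
        exact hmain i hi a p
      rw [hsum, Finset.sum_congr rfl (fun a _ => Finset.sum_congr rfl (hlast a))]
      exact add_right_comm _ _ _
    have hS2 : S2 = ∑ j ∈ Finset.Icc 1 k, ∑ a : Fin d, ∑ P ∈ wordsLen d j,
        ∑ q ∈ wordsLen d (k - j), Yt b a P q := by
      rw [sum_Icc_one, hS2def]
      refine Finset.sum_congr rfl fun i hi => ?_
      have h5 : k - (i + 1) = k - 1 - i := by omega
      rw [h5]
      have e1 : (∑ a : Fin d, ∑ p ∈ wordsLen d i, ∑ c : Fin d,
            ∑ q ∈ wordsLen d (k - 1 - i), Yt b c (a :: p) q)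
          = ∑ c : Fin d, ∑ a : Fin d, ∑ p ∈ wordsLen d i,
            ∑ q ∈ wordsLen d (k - 1 - i), Yt b c (a :: p) q := by
        have e0 : (∑ a : Fin d, ∑ p ∈ wordsLen d i, ∑ c : Fin d,
              ∑ q ∈ wordsLen d (k - 1 - i), Yt b c (a :: p) q)
            = ∑ a : Fin d, ∑ c : Fin d, ∑ p ∈ wordsLen d i,
              ∑ q ∈ wordsLen d (k - 1 - i), Yt b c (a :: p) q :=
          Finset.sum_congr rfl fun a _ => Finset.sum_comm
        rw [e0]
        exact Finset.sum_comm
      rw [e1]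
      exact Finset.sum_congr rfl fun c _ =>
        (sum_wordsLen_cons i (fun P => ∑ q ∈ wordsLen d (k - 1 - i), Yt b c P q)).symm
    have hS1 : S1 = (∑ j ∈ Finset.Icc 1 k, ∑ a : Fin d, ∑ p ∈ wordsLen d j,
        ∑ v ∈ wordsLen d (k - j), Xt b a p v) + Rsn d b (k + 1) := by
      rw [hS1def, Finset.sum_range_succ', sum_Icc_one]
      congr 1
      rw [Rsn_succ]
      refine Finset.sum_congr rfl fun a _ => ?_
      rw [Nat.sub_zero, wordsLen_zero, Finset.sum_singleton]
      exact Finset.sum_congr rfl fun v _ => Xt_nil b a v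
    have hXY : (∑ j ∈ Finset.Icc 1 k, ∑ a : Fin d, ∑ p ∈ wordsLen d j,
          ∑ v ∈ wordsLen d (k - j), Xt b a p v)
        + (∑ j ∈ Finset.Icc 1 k, ∑ a : Fin d, ∑ P ∈ wordsLen d j,
          ∑ q ∈ wordsLen d (k - j), Yt b a P q)
        = ∑ a : Fin d, Phi a (Gs d b k) := by
      rw [← Finset.sum_add_distrib]
      have : ∀ j ∈ Finset.Icc 1 k,
          (∑ a : Fin d, ∑ p ∈ wordsLen d j, ∑ v ∈ wordsLen d (k - j), Xt b a p v)
            + (∑ a : Fin d, ∑ P ∈ wordsLen d j, ∑ q ∈ wordsLen d (k - j), Yt b a P q)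
          = ∑ a : Fin d, ∑ p ∈ wordsLen d j, ∑ q ∈ wordsLen d (k - j),
              Phi a (Tt b p q) := by
        intro j hj
        rw [← Finset.sum_add_distrib]
        refine Finset.sum_congr rfl fun a _ => ?_
        rw [← Finset.sum_add_distrib]
        refine Finset.sum_congr rfl fun p hp => ?_
        rw [← Finset.sum_add_distrib]
        refine Finset.sum_congr rfl fun q _ => ?_
        have hp1 : p ≠ [] := by
          rw [mem_wordsLen] at hp
          simp only [Finset.mem_Icc] at hj
          intro h; subst h; simp at hp; omega
        exact X_add_Y b a p q hp1
      rw [Finset.sum_congr rfl this, Finset.sum_comm]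
      refine Finset.sum_congr rfl fun a _ => ?_
      rw [Gs, map_sum]
      refine Finset.sum_congr rfl fun j _ => ?_
      rw [map_sum]
      refine Finset.sum_congr rfl fun p _ => ?_
      rw [map_sum]
    have hPhiGs : ∑ a : Fin d, Phi a (Gs d b k) = k • Rsn d b (k + 1) := by
      rw [Rsn_succ, Finset.smul_sum]
      refine Finset.sum_congr rfl fun a _ => ?_
      rw [ih, map_nsmul, Rsn, map_sum]
      exact congrArg (fun z => k • z) (Finset.sum_congr rfl fun w _ => Phi_basis a b w)
    rw [hGs2, hS1, hS2, add_right_comm, hXY, hPhiGs, succ_nsmul]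

end Main
lemma Rtens_succ (d : ℕ) (k : ℕ) :
    Rtens d (k + 1) = ∑ b : Fin d, Rsn d b k := by
  rw [Rtens, sum_wordsLen_snoc]
  exact Finset.sum_congr rfl fun b _ => rfl

/-- The quadratic fixed-point equation for `R`:
for every `n ≥ 1`, `(n−1)·R_n = Σ_{ℓ=1}^{n−1} R_ℓ ▷ R_{n−ℓ}`. -/
theorem R_fixed_point_equation (d : ℕ) (hd : 1 ≤ d) :
    ∀ n : ℕ, 1 ≤ n →
      ((n : ℝ) - 1) • Rtens d n =
        ∑ ℓ ∈ Finset.Icc 1 (n - 1), rop (Rtens d ℓ) (Rtens d (n - ℓ)) := by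
  intro n hn
  obtain ⟨k, rfl⟩ : ∃ k, n = k + 1 := ⟨n - 1, by omega⟩
  have hk : k + 1 - 1 = k := by omega
  rw [hk]
  have hrop : ∀ ℓ ∈ Finset.Icc 1 k, rop (Rtens d ℓ) (Rtens d (k + 1 - ℓ))
      = ∑ b : Fin d, ∑ u ∈ wordsLen d ℓ, ∑ v ∈ wordsLen d (k - ℓ), Tt b u v := by
    intro ℓ hℓ
    simp only [Finset.mem_Icc] at hℓ
    have h5 : k + 1 - ℓ = (k - ℓ) + 1 := by omega
    rw [h5, Rtens, Rtens, map_sum, sum_wordsLen_snoc (k - ℓ)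
      (fun v => (rop (∑ w ∈ wordsLen d ℓ, wd w ⊗ₜ[ℝ] rW w)) (wd v ⊗ₜ[ℝ] rW v))]
    refine Finset.sum_congr rfl fun b _ => ?_
    have e3 : ∀ v : Word d,
        (rop (∑ w ∈ wordsLen d ℓ, wd w ⊗ₜ[ℝ] rW w))
            (wd (v ++ [b]) ⊗ₜ[ℝ] rW (v ++ [b]))
          = ∑ u ∈ wordsLen d ℓ, Tt b u v := by
      intro v
      rw [map_sum, LinearMap.coe_sum, Finset.sum_apply]
      refine Finset.sum_congr rfl fun u _ => ?_
      rw [rop_tmul, halfSh_wd, hsW_snoc]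
      rfl
    rw [Finset.sum_congr rfl fun v _ => e3 v]
    exact Finset.sum_comm
  have hRHS : ∑ ℓ ∈ Finset.Icc 1 k, rop (Rtens d ℓ) (Rtens d (k + 1 - ℓ))
      = k • Rtens d (k + 1) := by
    rw [Finset.sum_congr rfl hrop, Finset.sum_comm, Rtens_succ d k, Finset.smul_sum]
    refine Finset.sum_congr rfl fun b _ => ?_
    exact Gs_eq b k
  rw [hRHS]
  have hc : ((k + 1 : ℕ) : ℝ) - 1 = ((k : ℕ) : ℝ) := by push_cast; ring
  rw [hc]
  exact Nat.cast_smul_eq_nsmul ℝ k _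

end
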